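/- arXiv:1707.04366 — 2 statements merged into one kernel-verified Lean document; each statement's English description precedes it below -/
import Mathlib

section
/- Let (R, m) be a Noetherian local ring, let f_1, ..., f_c ∈ m, and let I be an ideal of R such that R/(I + (f_1, ..., f_c)) has finite length. Then there exists an integer N > 0 such that for all ε_1, ..., ε_c ∈ m^N, the ideals I + (f_1, ..., f_c) and I + (f_1 + ε_1, ..., f_c + ε_c) are equal. -/
open IsLocalRing

theorem stmt_0 {R : Type*} [CommRing R] [IsNoetherianRing R] [IsLocalRing R]
    {c : ℕ} (f : Fin c → R) (hf : ∀ i, f i ∈ maximalIdeal R) (I : Ideal R)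
    (hlen : IsFiniteLength R (R ⧸ (I ⊔ Ideal.span (Set.range f)))) :
    ∃ N : ℕ, 0 < N ∧ ∀ ε : Fin c → R, (∀ i, ε i ∈ (maximalIdeal R) ^ N) →
      I ⊔ Ideal.span (Set.range f) =
        I ⊔ Ideal.span (Set.range fun i => f i + ε i) := by
  set J := I ⊔ Ideal.span (Set.range f) with hJ
  rw [isFiniteLength_iff_isNoetherian_isArtinian] at hlen
  obtain ⟨hNoeth, hArt⟩ := hlen
  -- find n with m^n ≤ J
  have hstab : ∃ n : ℕ, (maximalIdeal R) ^ n ≤ J := by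
    have hanti : ∀ k l : ℕ, k ≤ l →
        ((maximalIdeal R) ^ l • (⊤ : Submodule R (R ⧸ J))) ≤
        ((maximalIdeal R) ^ k • ⊤) :=
      fun k l h => Submodule.smul_mono_left (Ideal.pow_le_pow_right h)
    obtain ⟨n, hn⟩ := IsArtinian.monotone_stabilizes
      (⟨fun k => OrderDual.toDual ((maximalIdeal R) ^ k • ⊤),
        fun k l h => hanti k l h⟩ : ℕ →o (Submodule R (R ⧸ J))ᵒᵈ)
    have hn' : (maximalIdeal R) ^ n • (⊤ : Submodule R (R ⧸ J)) =
        (maximalIdeal R) ^ (n + 1) • ⊤ := hn (n + 1) (Nat.le_succ n)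
    have hbot : (maximalIdeal R) ^ n • (⊤ : Submodule R (R ⧸ J)) = ⊥ := by
      have heq : (maximalIdeal R) ^ (n + 1) • (⊤ : Submodule R (R ⧸ J)) =
          maximalIdeal R • ((maximalIdeal R) ^ n • ⊤) := by
        rw [pow_succ, mul_comm, mul_smul]
      exact Submodule.eq_bot_of_le_smul_of_le_jacobson_bot (maximalIdeal R) _
        (IsNoetherian.noetherian _) (le_of_eq (hn'.trans heq)) (maximalIdeal_le_jacobson ⊥)
    refine ⟨n, fun x hx => ?_⟩
    have : (Ideal.Quotient.mk J) x ∈ (maximalIdeal R) ^ n • (⊤ : Submodule R (R ⧸ J)) := by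
      have : (Ideal.Quotient.mk J) x = x • ((Ideal.Quotient.mk J) 1) := by
        rw [Algebra.smul_def, map_one, mul_one, Ideal.Quotient.algebraMap_eq]
      rw [this]
      exact Submodule.smul_mem_smul hx trivial
    rw [hbot] at this
    exact (Submodule.Quotient.mk_eq_zero J).mp this
  obtain ⟨n, hn⟩ := hstab
  refine ⟨n + 1, Nat.succ_pos n, fun ε hε => ?_⟩
  have hmN : (maximalIdeal R) ^ (n + 1) ≤ maximalIdeal R • J := by
    rw [pow_succ, smul_eq_mul, mul_comm]
    exact Ideal.mul_mono le_rfl hn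
  set J' := I ⊔ Ideal.span (Set.range fun i => f i + ε i) with hJ'
  have hfJ : ∀ i, f i ∈ J := fun i =>
    (le_sup_right : Ideal.span (Set.range f) ≤ J) (Ideal.subset_span ⟨i, rfl⟩)
  have hεJ : ∀ i, ε i ∈ maximalIdeal R • J := fun i => hmN (hε i)
  -- J' ≤ J
  have hJ'J : J' ≤ J := by
    refine sup_le le_sup_left (Ideal.span_le.mpr ?_)
    rintro x ⟨i, rfl⟩
    exact add_mem (hfJ i) (Submodule.smul_le_right (hεJ i))
  -- J ≤ J' ⊔ m • J
  have hkey : J ≤ J' ⊔ maximalIdeal R • J := by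
    rw [hJ]
    refine sup_le (le_trans (le_sup_left : I ≤ J') le_sup_left) (Ideal.span_le.mpr ?_)
    rintro x ⟨i, rfl⟩
    have hfi : f i = (f i + ε i) - ε i := by ring
    rw [hfi]
    refine sub_mem (Submodule.mem_sup_left ?_) (Submodule.mem_sup_right (hεJ i))
    exact (le_sup_right : _ ≤ J') (Ideal.subset_span ⟨i, rfl⟩)
  have hnak := Submodule.sup_eq_sup_smul_of_le_smul_of_le_jacobson
    (I := maximalIdeal R) (J := ⊥) (N := J') (N' := J)
    (IsNoetherian.noetherian J) (maximalIdeal_le_jacobson ⊥) hkey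
  rw [Submodule.bot_smul, sup_bot_eq, sup_eq_right.mpr hJ'J] at hnak
  exact hnak
end

section
/- Let R be a commutative ring of prime characteristic p, let x_1, ..., x_d ∈ R and let J be an ideal such that R/(J + (x_1,...,x_d)) has finite length. Then the length of R/(J + (x_1^p, ..., x_d^p)) is at most p^d times the length of R/(J + (x_1, ..., x_d)). -/
/-!
Multiplication by `z` maps `R ⧸ (I + (y))` onto the kernel of `R ⧸ (I + (yz)) → R ⧸ (I + (z))`,
so `ℓ(R ⧸ (I + (yz))) ≤ ℓ(R ⧸ (I + (y))) + ℓ(R ⧸ (I + (z)))`. Iterating with `z = y ^ k` gives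
`ℓ(R ⧸ (I + (y ^ n))) ≤ n ℓ(R ⧸ (I + (y)))`, and raising the generators `x_i` to the `n`-th power
one at a time gives the factor `n ^ d`.
-/

/-- The length of a module, defined as the Krull dimension of its lattice of submodules. -/
noncomputable def moduleLength (R M : Type*) [Ring R] [AddCommGroup M] [Module R M] :
    WithBot ℕ∞ :=
  Order.krullDim (Submodule R M)

lemma moduleLength_eq_length (R M : Type*) [Ring R] [AddCommGroup M] [Module R M] :
    moduleLength R M = Module.length R M :=
  (Module.coe_length R M).symm

lemma Module.length_range_le_of_le_ker {R M N : Type*} [Ring R] [AddCommGroup M] [Module R M]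
    [AddCommGroup N] [Module R N] (f : M →ₗ[R] N) {P : Submodule R M}
    (h : P ≤ LinearMap.ker f) : length R (LinearMap.range f) ≤ length R (M ⧸ P) := by
  rw [← Submodule.range_liftQ P f h]
  exact length_le_of_surjective _ (LinearMap.surjective_rangeRestrict _)

namespace Ideal

open Module

variable {R : Type*} [CommRing R]

lemma length_quotient_sup_span_mul_le (I : Ideal R) (y z : R) :
    length R (R ⧸ (I ⊔ span {y * z})) ≤
      length R (R ⧸ (I ⊔ span {y})) + length R (R ⧸ (I ⊔ span {z})) := by
  set a := I ⊔ span {y * z}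
  let f : R →ₗ[R] R ⧸ a := a.mkQ ∘ₗ LinearMap.toSpanSingleton R R z
  have hker : I ⊔ span {y} ≤ LinearMap.ker f := by
    refine sup_le (fun r hr => ?_) ((span_singleton_le_iff_mem _).2 ?_) <;>
      simp only [f, LinearMap.mem_ker, LinearMap.comp_apply, LinearMap.toSpanSingleton_apply,
        smul_eq_mul, Submodule.mkQ_apply, Submodule.Quotient.mk_eq_zero]
    · exact mem_sup_left (I.mul_mem_right z hr)
    · exact mem_sup_right (mem_span_singleton_self _)
  have hrange : LinearMap.range f = Submodule.map a.mkQ (span {z}) := by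
    rw [LinearMap.range_comp, ← LinearMap.span_singleton_eq_range]
  have hsup : a ⊔ span {z} = I ⊔ span {z} := by
    rw [sup_assoc, sup_eq_right.2 (span_singleton_le_span_singleton.2 (dvd_mul_left z y))]
  calc length R (R ⧸ a)
      = length R (LinearMap.range f) + length R ((R ⧸ a) ⧸ LinearMap.range f) :=
        length_eq_add_of_exact _ _ (Submodule.subtype_injective _) (Submodule.mkQ_surjective _)
          (LinearMap.exact_subtype_mkQ _)
    _ = length R (LinearMap.range f) + length R (R ⧸ (I ⊔ span {z})) := by
        rw [hrange, (Submodule.quotientQuotientEquivQuotientSup a _).length_eq, hsup]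
    _ ≤ _ := by grw [Module.length_range_le_of_le_ker f hker]

lemma length_quotient_sup_span_pow_le (I : Ideal R) (y : R) (n : ℕ) :
    length R (R ⧸ (I ⊔ span {y ^ n})) ≤ n * length R (R ⧸ (I ⊔ span {y})) := by
  induction n with
  | zero =>
    rw [pow_zero, span_singleton_one, sup_top_eq, Nat.cast_zero, zero_mul, nonpos_iff_eq_zero]
    exact length_eq_zero
  | succ n ih =>
    calc length R (R ⧸ (I ⊔ span {y ^ (n + 1)}))
        ≤ length R (R ⧸ (I ⊔ span {y})) + length R (R ⧸ (I ⊔ span {y ^ n})) := by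
          rw [pow_succ']; exact length_quotient_sup_span_mul_le I y (y ^ n)
      _ ≤ length R (R ⧸ (I ⊔ span {y})) + n * length R (R ⧸ (I ⊔ span {y})) := by grw [ih]
      _ = (n + 1 : ℕ) * length R (R ⧸ (I ⊔ span {y})) := by push_cast; ring

lemma length_quotient_sup_span_image_pow_le {ι : Type*} (J : Ideal R) (x : ι → R) (n : ℕ)
    (s : Finset ι) :
    length R (R ⧸ (J ⊔ span ((fun i => x i ^ n) '' s))) ≤
      n ^ s.card * length R (R ⧸ (J ⊔ span (x '' s))) := by
  classical
  induction s using Finset.induction_on generalizing J with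
  | empty =>
    rw [Finset.card_empty, pow_zero, one_mul, Finset.coe_empty, Set.image_empty, Set.image_empty]
  | insert i s hi ih =>
    rw [Finset.card_insert_of_notMem hi, Finset.coe_insert, Set.image_insert_eq,
      Set.image_insert_eq, span_insert, span_insert]
    calc length R (R ⧸ (J ⊔ (span {x i ^ n} ⊔ span ((fun i => x i ^ n) '' s))))
        ≤ n * length R (R ⧸ ((J ⊔ span ((fun i => x i ^ n) '' s)) ⊔ span {x i})) := by
          rw [sup_left_comm, sup_comm]; exact length_quotient_sup_span_pow_le _ _ n
      _ ≤ n * (n ^ s.card * length R (R ⧸ ((J ⊔ span {x i}) ⊔ span (x '' s)))) := by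
          rw [sup_right_comm]; grw [ih]
      _ = n ^ (s.card + 1) * length R (R ⧸ (J ⊔ (span {x i} ⊔ span (x '' s)))) := by
          rw [sup_assoc]; ring

end Ideal

theorem stmt_10_general {R : Type*} [CommRing R]
    (p : ℕ)
    {d : ℕ} (x : Fin d → R) (J : Ideal R) :
    moduleLength R (R ⧸ (J ⊔ Ideal.span (Set.range fun i => x i ^ p))) ≤
      ((p ^ d : ℕ) : WithBot ℕ∞) *
        moduleLength R (R ⧸ (J ⊔ Ideal.span (Set.range x))) := by
  have h := Ideal.length_quotient_sup_span_image_pow_le J x p Finset.univ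
  rw [Finset.coe_univ, Set.image_univ, Set.image_univ, Finset.card_univ, Fintype.card_fin] at h
  rw [moduleLength_eq_length, moduleLength_eq_length]
  exact_mod_cast h

theorem stmt_10 {R : Type*} [CommRing R] [IsNoetherianRing R]
    (p : ℕ) [Fact p.Prime] [CharP R p]
    {d : ℕ} (x : Fin d → R) (J : Ideal R)
    (hfl : IsFiniteLength R (R ⧸ (J ⊔ Ideal.span (Set.range x)))) :
    moduleLength R (R ⧸ (J ⊔ Ideal.span (Set.range fun i => x i ^ p))) ≤
      ((p ^ d : ℕ) : WithBot ℕ∞) *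
        moduleLength R (R ⧸ (J ⊔ Ideal.span (Set.range x))) :=
  stmt_10_general p x J
end
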